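/- If G = C_n (n ≥ 3 vertices, m = n edges) and G_C is obtained by attaching t cycles of length r ≥ 3 at every vertex, then HM(G_C) = 16n + 32mt^2 + 16mt + 8nt^3 + 16nt^2 + 16rnt + 16nt, i.e. HM(G_C) = 16n + 32nt^2 + 16nt + 8nt^3 + 16nt^2 + 16rnt + 16nt. -/

import Mathlib

open Finset

variable {V : Type*}

/-- Edge set of `G` as a `Finset`, using classical decidability. -/
noncomputable def edgeFS [Fintype V] (G : SimpleGraph V) : Finset (Sym2 V) :=
  letI := Classical.decEq V
  letI : DecidableRel G.Adj := Classical.decRel _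
  G.edgeFinset

/-- Degree of a vertex, using classical decidability. -/
noncomputable def deg [Fintype V] (G : SimpleGraph V) (v : V) : ℕ :=
  letI : DecidableRel G.Adj := Classical.decRel _
  G.degree v

/-- Sum over the edges of `G` of a symmetric integer-valued function of the endpoints. -/
noncomputable def edgeSum [Fintype V] (G : SimpleGraph V) (f : V → V → ℤ)
    (hf : ∀ u v, f u v = f v u) : ℤ :=
  ∑ e ∈ edgeFS G, Sym2.lift ⟨f, hf⟩ e

/-- The hyper Zagreb index `HM(G) = Σ_{uv ∈ E(G)} (d(u)+d(v))²`. -/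
noncomputable def hm [Fintype V] (G : SimpleGraph V) : ℕ :=
  ∑ e ∈ edgeFS G, Sym2.lift ⟨fun u v => (deg G u + deg G v) ^ 2,
    fun u v => by simp [add_comm]⟩ e

/-- The first Zagreb index `M₁(G) = Σ_v d(v)²`. -/
noncomputable def m1 [Fintype V] (G : SimpleGraph V) : ℕ :=
  ∑ v, (deg G v) ^ 2


variable {V : Type*}

/-- Type-I generalized thorn graph `G_P`: attach `t v` pendant paths of order `r`
(i.e. with `r - 1` new vertices each) at each vertex `v` of `G`,
identifying `v` with an endpoint of each path. -/
def thornPath (G : SimpleGraph V) (t : V → ℕ) (r : ℕ) :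
    SimpleGraph (V ⊕ ((Σ v : V, Fin (t v)) × Fin (r - 1))) where
  Adj x y :=
    match x, y with
    | Sum.inl u, Sum.inl v => G.Adj u v
    | Sum.inl u, Sum.inr (p, j) => p.1 = u ∧ j.val = 0
    | Sum.inr (p, j), Sum.inl u => p.1 = u ∧ j.val = 0
    | Sum.inr (p, j), Sum.inr (q, j') => p = q ∧ (j.val + 1 = j'.val ∨ j'.val + 1 = j.val)
  symm := by
    constructor
    rintro (u | ⟨p, j⟩) (v | ⟨q, j'⟩) h
    · exact G.adj_symm h
    · exact h
    · exact h
    · exact ⟨h.1.symm, h.2.symm⟩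
  loopless := by
    constructor
    rintro (u | ⟨p, j⟩) h
    · exact G.irrefl h
    · omega

/-- Type-II generalized thorn graph `G_C`: attach `t v` cycles of length `r`
at each vertex `v` of `G`, identifying `v` with one vertex of each cycle. -/
def thornCycle (G : SimpleGraph V) (t : V → ℕ) (r : ℕ) :
    SimpleGraph (V ⊕ ((Σ v : V, Fin (t v)) × Fin (r - 1))) where
  Adj x y :=
    match x, y with
    | Sum.inl u, Sum.inl v => G.Adj u v
    | Sum.inl u, Sum.inr (p, j) => p.1 = u ∧ (j.val = 0 ∨ j.val = r - 2)
    | Sum.inr (p, j), Sum.inl u => p.1 = u ∧ (j.val = 0 ∨ j.val = r - 2)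
    | Sum.inr (p, j), Sum.inr (q, j') => p = q ∧ (j.val + 1 = j'.val ∨ j'.val + 1 = j.val)
  symm := by
    constructor
    rintro (u | ⟨p, j⟩) (v | ⟨q, j'⟩) h
    · exact G.adj_symm h
    · exact h
    · exact h
    · exact ⟨h.1.symm, h.2.symm⟩
  loopless := by
    constructor
    rintro (u | ⟨p, j⟩) h
    · exact G.irrefl h
    · omega

/-- Type-III generalized thorn graph `G_K`: attach `t v` copies of the complete graph `K_r`
at each vertex `v` of `G`, identifying `v` with one vertex of each copy. -/
def thornComplete (G : SimpleGraph V) (t : V → ℕ) (r : ℕ) :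
    SimpleGraph (V ⊕ ((Σ v : V, Fin (t v)) × Fin (r - 1))) where
  Adj x y :=
    match x, y with
    | Sum.inl u, Sum.inl v => G.Adj u v
    | Sum.inl u, Sum.inr (p, j) => p.1 = u
    | Sum.inr (p, j), Sum.inl u => p.1 = u
    | Sum.inr (p, j), Sum.inr (q, j') => p = q ∧ j ≠ j'
  symm := by
    constructor
    rintro (u | ⟨p, j⟩) (v | ⟨q, j'⟩) h
    · exact G.adj_symm h
    · exact h
    · exact h
    · exact ⟨h.1.symm, h.2.symm⟩
  loopless := by
    constructor
    rintro (u | ⟨p, j⟩) h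
    · exact G.irrefl h
    · exact h.2 rfl

/-- Type-IV generalized thorn graph `G_A`: attach `t v` copies of the complete bipartite
graph `K_{r,s}` at each vertex `v`, identifying `v` with one vertex of the part of size `r`. -/
def thornBipartite (G : SimpleGraph V) (t : V → ℕ) (r s : ℕ) :
    SimpleGraph (V ⊕ ((Σ v : V, Fin (t v)) × (Fin (r - 1) ⊕ Fin s))) where
  Adj x y :=
    match x, y with
    | Sum.inl u, Sum.inl v => G.Adj u v
    | Sum.inl u, Sum.inr (p, x) => p.1 = u ∧ x.isRight
    | Sum.inr (p, x), Sum.inl u => p.1 = u ∧ x.isRight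
    | Sum.inr (p, x), Sum.inr (q, y) => p = q ∧ x.isLeft ≠ y.isLeft
  symm := by
    constructor
    rintro (u | ⟨p, x⟩) (v | ⟨q, y⟩) h
    · exact G.adj_symm h
    · exact h
    · exact h
    · exact ⟨h.1.symm, h.2.symm⟩
  loopless := by
    constructor
    rintro (u | ⟨p, x⟩) h
    · exact G.irrefl h
    · exact h.2 rfl

/-- Type-V generalized thorn graph `G_{C'}`: join `t v` disjoint copies of the cycle `C_r`
to each vertex `v` of `G`, each by a new bridge edge. -/
def joinedCycle (G : SimpleGraph V) (t : V → ℕ) (r : ℕ) :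
    SimpleGraph (V ⊕ ((Σ v : V, Fin (t v)) × Fin r)) where
  Adj x y :=
    match x, y with
    | Sum.inl u, Sum.inl v => G.Adj u v
    | Sum.inl u, Sum.inr (p, j) => p.1 = u ∧ j.val = 0
    | Sum.inr (p, j), Sum.inl u => p.1 = u ∧ j.val = 0
    | Sum.inr (p, j), Sum.inr (q, j') =>
        p = q ∧ j ≠ j' ∧ ((j.val + 1) % r = j'.val ∨ (j'.val + 1) % r = j.val)
  symm := by
    constructor
    rintro (u | ⟨p, j⟩) (v | ⟨q, j'⟩) h
    · exact G.adj_symm h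
    · exact h
    · exact h
    · exact ⟨h.1.symm, h.2.1.symm, h.2.2.symm⟩
  loopless := by
    constructor
    rintro (u | ⟨p, j⟩) h
    · exact G.irrefl h
    · exact h.2.1 rfl

/-- Type-VI generalized thorn graph `G_{K'}`: join `t v` disjoint copies of the complete
graph `K_r` to each vertex `v` of `G`, each by a new bridge edge. -/
def joinedComplete (G : SimpleGraph V) (t : V → ℕ) (r : ℕ) :
    SimpleGraph (V ⊕ ((Σ v : V, Fin (t v)) × Fin r)) where
  Adj x y :=
    match x, y with
    | Sum.inl u, Sum.inl v => G.Adj u v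
    | Sum.inl u, Sum.inr (p, j) => p.1 = u ∧ j.val = 0
    | Sum.inr (p, j), Sum.inl u => p.1 = u ∧ j.val = 0
    | Sum.inr (p, j), Sum.inr (q, j') => p = q ∧ j ≠ j'
  symm := by
    constructor
    rintro (u | ⟨p, j⟩) (v | ⟨q, j'⟩) h
    · exact G.adj_symm h
    · exact h
    · exact h
    · exact ⟨h.1.symm, h.2.symm⟩
  loopless := by
    constructor
    rintro (u | ⟨p, j⟩) h
    · exact G.irrefl h
    · exact h.2 rfl

/-! In `G_C` the base vertices have degree `2 + 2t` and the new vertices degree `2`. Counting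
each edge from both of its ends, `2 HM(G_C) = ∑ₓ ∑_{y ~ x} (d x + d y)²`. The new vertices of one
attached cycle induce a path on `r - 1` vertices whose two ends are joined to the base vertex, so
the edges are the `n` edges of `C_n`, `2nt` attaching edges and `nt(r - 2)` path edges, of weights
`(4 + 4t)²`, `(4 + 2t)²` and `4²`. -/

open SimpleGraph

section EdgeSums

variable [Fintype V] (G : SimpleGraph V)

theorem edgeFS_eq_edgeFinset [DecidableEq V] [DecidableRel G.Adj] :
    edgeFS G = G.edgeFinset := by
  ext e
  simp only [edgeFS, mem_edgeFinset]

theorem deg_eq_degree (v : V) [Fintype (G.neighborSet v)] : deg G v = G.degree v := by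
  simp only [deg, degree, neighborFinset]
  congr 1
  ext w
  simp

theorem sum_ite_adj_const {M : Type*} [AddCommMonoid M] [DecidableRel G.Adj] (v : V) (c : M) :
    ∑ w, (if G.Adj v w then c else 0) = G.degree v • c := by
  rw [Finset.sum_ite, Finset.sum_const_zero, add_zero, Finset.sum_const,
    ← neighborFinset_eq_filter, card_neighborFinset_eq_degree]

theorem deg_eq_sum_ite [DecidableRel G.Adj] (v : V) :
    deg G v = ∑ w, if G.Adj v w then 1 else 0 := by
  rw [sum_ite_adj_const, smul_eq_mul, mul_one, deg_eq_degree]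

theorem two_nsmul_sum_edgeFS_lift {M : Type*} [AddCommMonoid M] [DecidableRel G.Adj]
    (f : V → V → M) (hf : ∀ u v, f u v = f v u) :
    2 • ∑ e ∈ edgeFS G, Sym2.lift ⟨f, hf⟩ e =
      ∑ x, ∑ y, if G.Adj x y then f x y else 0 := by
  classical
  have sum_darts :
      ∑ x, ∑ y, (if G.Adj x y then f x y else 0) = ∑ d : G.Dart, f d.fst d.snd := by
    rw [← Finset.sum_product', Finset.sum_ite, Finset.sum_const_zero, add_zero]
    exact (Finset.sum_bij' (fun d _ ↦ (d.fst, d.snd)) (fun p hp ↦ ⟨p, (mem_filter.1 hp).2⟩)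
      (by simp) (by simp) (by simp) (by simp) (by simp)).symm
  rw [sum_darts, edgeFS_eq_edgeFinset, ← Finset.sum_fiberwise_of_maps_to (g := Dart.edge)
    (t := G.edgeFinset) (fun d _ ↦ mem_edgeFinset.2 d.edge_mem), Finset.smul_sum]
  refine Finset.sum_congr rfl fun e he ↦ ?_
  induction e with
  | _ v w =>
    let d : G.Dart := ⟨(v, w), mem_edgeFinset.1 he⟩
    calc 2 • Sym2.lift ⟨f, hf⟩ s(v, w) = ∑ d' ∈ {d, d.symm}, f d'.fst d'.snd := by
          rw [Finset.sum_pair d.symm_ne.symm]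
          simp [d, hf v w, two_nsmul]
      _ = _ := by
          congr 1
          rw [← Dart.edge_fiber d]
          ext
          simp only [mem_filter, mem_univ, true_and]
          rfl

theorem two_mul_hm [DecidableRel G.Adj] :
    2 * hm G = ∑ x, ∑ y, if G.Adj x y then (deg G x + deg G y) ^ 2 else 0 :=
  two_nsmul_sum_edgeFS_lift G _ _

end EdgeSums

section PathGraph

variable {m : ℕ}

instance : DecidableRel (pathGraph m).Adj :=
  fun _ _ ↦ decidable_of_iff' _ pathGraph_adj

theorem pathGraph_degree (hm : 2 ≤ m) (j : Fin m) :
    (pathGraph m).degree j = if (j : ℕ) = 0 ∨ (j : ℕ) = m - 1 then 1 else 2 := by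
  have degree_eq_card : (pathGraph m).degree j = #{k ∈ range m | (j : ℕ) + 1 = k ∨ k + 1 = j} := by
    rw [← card_neighborFinset_eq_degree, ← Finset.card_map Fin.valEmbedding]
    congr 1
    ext k
    simp only [mem_map, mem_neighborFinset, pathGraph_adj, Fin.valEmbedding_apply, mem_filter,
      mem_range]
    constructor
    · rintro ⟨k, hk, rfl⟩
      exact ⟨k.isLt, hk⟩
    · rintro ⟨hk, hadj⟩
      exact ⟨⟨k, hk⟩, hadj, rfl⟩
  rw [degree_eq_card]
  have hj := j.isLt
  split_ifs with hend
  · rw [Finset.card_eq_one]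
    rcases hend with h | h
    · exact ⟨1, by ext k; simp only [mem_filter, mem_range, mem_singleton]; omega⟩
    · exact ⟨j - 1, by ext k; simp only [mem_filter, mem_range, mem_singleton]; omega⟩
  · rw [Finset.card_eq_two]
    exact ⟨j - 1, j + 1, by omega,
      by ext k; simp only [mem_filter, mem_range, mem_insert, mem_singleton]; omega⟩

theorem card_filter_eq_zero_or_eq_sub_one (hm : 2 ≤ m) :
    #{j : Fin m | (j : ℕ) = 0 ∨ (j : ℕ) = m - 1} = 2 := by
  rw [Finset.card_eq_two]
  refine ⟨⟨0, by omega⟩, ⟨m - 1, by omega⟩, Fin.ne_of_val_ne (show 0 ≠ m - 1 by omega), ?_⟩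
  ext j
  simp only [mem_filter, mem_univ, true_and, mem_insert, mem_singleton, Fin.ext_iff]

theorem sum_degree_pathGraph (hm : 2 ≤ m) : ∑ j, (pathGraph m).degree j = 2 * (m - 1) := by
  have degree_add_isEnd (j : Fin m) :
      (pathGraph m).degree j + (if (j : ℕ) = 0 ∨ (j : ℕ) = m - 1 then 1 else 0) = 2 := by
    rw [pathGraph_degree hm]
    split_ifs <;> rfl
  have := Finset.sum_congr rfl fun j (_ : j ∈ univ) ↦ degree_add_isEnd j
  rw [Finset.sum_add_distrib, Finset.sum_boole, card_filter_eq_zero_or_eq_sub_one hm] at this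
  simp only [sum_const, card_univ, Fintype.card_fin, smul_eq_mul, Nat.cast_ofNat] at this
  omega

end PathGraph

section ThornCycle

variable (G : SimpleGraph V) (t : V → ℕ) {r : ℕ}

@[simp] theorem thornCycle_adj_inl_inl {u v : V} :
    (thornCycle G t r).Adj (.inl u) (.inl v) ↔ G.Adj u v := Iff.rfl

-- `r - 2` is written `r - 1 - 1`, the index of the last vertex of the path on `Fin (r - 1)`.
@[simp] theorem thornCycle_adj_inl_inr {u : V} {b : (Σ v, Fin (t v)) × Fin (r - 1)} :
    (thornCycle G t r).Adj (.inl u) (.inr b) ↔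
      b.1.1 = u ∧ ((b.2 : ℕ) = 0 ∨ (b.2 : ℕ) = r - 1 - 1) := Iff.rfl

@[simp] theorem thornCycle_adj_inr_inl {u : V} {b : (Σ v, Fin (t v)) × Fin (r - 1)} :
    (thornCycle G t r).Adj (.inr b) (.inl u) ↔
      b.1.1 = u ∧ ((b.2 : ℕ) = 0 ∨ (b.2 : ℕ) = r - 1 - 1) := Iff.rfl

@[simp] theorem thornCycle_adj_inr_inr {b b' : (Σ v, Fin (t v)) × Fin (r - 1)} :
    (thornCycle G t r).Adj (.inr b) (.inr b') ↔
      b.1 = b'.1 ∧ (pathGraph (r - 1)).Adj b.2 b'.2 := by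
  rw [pathGraph_adj]
  rfl

variable [Fintype V] {M : Type*} [AddCommMonoid M]

theorem sum_ite_thornCycle_adj_inl_inr [DecidableRel (thornCycle G t r).Adj] (hr : 3 ≤ r)
    (u : V) (c : M) :
    ∑ b, (if (thornCycle G t r).Adj (.inl u) (.inr b) then c else 0) = (2 * t u) • c := by
  classical
  simp only [thornCycle_adj_inl_inr, Fintype.sum_prod_type, ite_and]
  have endpoints :
      ∑ j : Fin (r - 1), (if (j : ℕ) = 0 ∨ (j : ℕ) = r - 1 - 1 then c else 0) = 2 • c := by
    rw [Finset.sum_ite, sum_const_zero, add_zero, sum_const,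
      card_filter_eq_zero_or_eq_sub_one (by omega)]
  rw [← Finset.univ_sigma_univ, Finset.sum_sigma]
  simp only [Finset.sum_ite_irrel, endpoints, sum_const_zero, Finset.sum_ite_eq', mem_univ,
    if_true, sum_const, card_univ, Fintype.card_fin, smul_smul, mul_comm]

theorem sum_ite_thornCycle_adj_inr_inr [DecidableRel (thornCycle G t r).Adj]
    (b : (Σ v, Fin (t v)) × Fin (r - 1)) (c : M) :
    ∑ b', (if (thornCycle G t r).Adj (.inr b) (.inr b') then c else 0) =
      (pathGraph (r - 1)).degree b.2 • c := by
  classical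
  simp only [thornCycle_adj_inr_inr, Fintype.sum_prod_type, ite_and, Finset.sum_ite_irrel,
    sum_const_zero, Finset.sum_ite_eq, mem_univ, if_true, sum_ite_adj_const]

theorem deg_thornCycle_inl (hr : 3 ≤ r) (u : V) :
    deg (thornCycle G t r) (.inl u) = deg G u + 2 * t u := by
  classical
  rw [deg_eq_sum_ite, Fintype.sum_sum_type, sum_ite_thornCycle_adj_inl_inr G t hr,
    deg_eq_sum_ite G]
  simp only [thornCycle_adj_inl_inl, smul_eq_mul, mul_one]

theorem deg_thornCycle_inr (hr : 3 ≤ r) (b : (Σ v, Fin (t v)) × Fin (r - 1)) :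
    deg (thornCycle G t r) (.inr b) = 2 := by
  classical
  rw [deg_eq_sum_ite, Fintype.sum_sum_type, sum_ite_thornCycle_adj_inr_inr,
    pathGraph_degree (by omega)]
  simp only [thornCycle_adj_inr_inl, ite_and, Finset.sum_ite_eq, mem_univ, if_true]
  split_ifs <;> rfl

theorem two_mul_hm_thornCycle [DecidableRel G.Adj] (hr : 3 ≤ r) :
    2 * hm (thornCycle G t r) =
      (∑ u, ∑ v, if G.Adj u v then (deg G u + 2 * t u + (deg G v + 2 * t v)) ^ 2 else 0)
        + 4 * ∑ u, t u * (deg G u + 2 * t u + 2) ^ 2 + 32 * (r - 2) * ∑ u, t u := by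
  classical
  have inl_inr :
      ∑ u, ∑ b, (if (thornCycle G t r).Adj (.inl u) (.inr b)
        then (deg G u + 2 * t u + 2) ^ 2 else 0) =
      2 * ∑ u, t u * (deg G u + 2 * t u + 2) ^ 2 := by
    simp only [sum_ite_thornCycle_adj_inl_inr G t hr, smul_eq_mul, mul_sum, mul_assoc]
  have inr_inl :
      ∑ b, ∑ u, (if (thornCycle G t r).Adj (.inr b) (.inl u)
        then (2 + (deg G u + 2 * t u)) ^ 2 else 0) =
      ∑ u, ∑ b, (if (thornCycle G t r).Adj (.inl u) (.inr b)
        then (deg G u + 2 * t u + 2) ^ 2 else 0) := by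
    rw [sum_comm]
    refine sum_congr rfl fun u _ ↦ sum_congr rfl fun b _ ↦ ?_
    rw [(thornCycle G t r).adj_comm, add_comm]
  have inr_inr :
      ∑ b, ∑ b', (if (thornCycle G t r).Adj (.inr b) (.inr b') then (2 + 2) ^ 2 else 0) =
      32 * (r - 2) * ∑ u, t u := by
    simp_rw [sum_ite_thornCycle_adj_inr_inr]
    simp only [smul_eq_mul, Fintype.sum_prod_type, ← sum_mul,
      sum_degree_pathGraph (show 2 ≤ r - 1 by omega), sum_const, card_univ, Fintype.card_sigma,
      Fintype.card_fin, smul_eq_mul, Nat.sub_sub]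
    ring
  rw [two_mul_hm, Fintype.sum_sum_type]
  simp only [Fintype.sum_sum_type, deg_thornCycle_inl G t hr, deg_thornCycle_inr G t hr,
    sum_add_distrib, inl_inr, inr_inl, inr_inr, thornCycle_adj_inl_inl]
  ring

end ThornCycle

theorem deg_cycleGraph {n : ℕ} (hn : 3 ≤ n) (u : Fin n) : deg (cycleGraph n) u = 2 := by
  obtain ⟨k, rfl⟩ : ∃ k, n = k + 3 := ⟨n - 3, by omega⟩
  rw [deg_eq_degree]
  exact cycleGraph_degree_three_le

theorem hyperZagreb_thornCycle_cycle (n t r : ℕ) (hn : 3 ≤ n) (hr : 3 ≤ r)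
    (m : ℕ) (hmn : m = n) :
    (hm (thornCycle (SimpleGraph.cycleGraph n) (fun _ => t) r) : ℤ) =
      16 * n + 32 * m * t ^ 2 + 16 * m * t + 8 * n * t ^ 3 + 16 * n * t ^ 2
        + 16 * r * n * t + 16 * n * t := by
  classical
  subst m
  have two_mul_hm_eq := two_mul_hm_thornCycle (cycleGraph n) (fun _ ↦ t) hr
  simp only [sum_ite_adj_const, ← deg_eq_degree, deg_cycleGraph hn, sum_const, card_univ,
    Fintype.card_fin, smul_eq_mul] at two_mul_hm_eq
  zify [show 2 ≤ r by omega] at two_mul_hm_eq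
  linarith
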